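/- arXiv:2304.02648 — 3 statements merged into one kernel-verified Lean document; each statement's English description precedes it below -/
import Mathlib

section
/- Let ψ ∈ (0, π/2), let N ≥ 2, and let ω, ω′ ∈ (0, 2π/(N−1)), ξ ∈ ℝ satisfy cos(ω − ω′ + ξ)·sin²ψ + cos((N−1)(ω − ω′))·cos²ψ = 1 and sin(ω − ω′ + ξ)·sin²ψ − sin((N−1)(ω − ω′))·cos²ψ = 0. Then ω = ω′ and cos ξ = 1. -/
open Real

/-- Uniqueness of the last Euler angle of `SU(N)`. -/
theorem stmt_4 (N : ℕ) (hN : 2 ≤ N) (ψ ω ω' ξ : ℝ)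
    (hψ : ψ ∈ Set.Ioo 0 (Real.pi / 2))
    (hω : ω ∈ Set.Ioo 0 (2 * Real.pi / (N - 1 : ℝ)))
    (hω' : ω' ∈ Set.Ioo 0 (2 * Real.pi / (N - 1 : ℝ)))
    (h1 : Real.cos (ω - ω' + ξ) * Real.sin ψ ^ 2
        + Real.cos ((N - 1 : ℝ) * (ω - ω')) * Real.cos ψ ^ 2 = 1)
    (h2 : Real.sin (ω - ω' + ξ) * Real.sin ψ ^ 2
        - Real.sin ((N - 1 : ℝ) * (ω - ω')) * Real.cos ψ ^ 2 = 0) :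
    ω = ω' ∧ Real.cos ξ = 1 := by
  obtain ⟨hψ0, hψπ⟩ := hψ
  have hs : 0 < Real.sin ψ := Real.sin_pos_of_pos_of_lt_pi hψ0 (by linarith [Real.pi_pos])
  have hc : 0 < Real.cos ψ := Real.cos_pos_of_mem_Ioo ⟨by linarith [Real.pi_pos], hψπ⟩
  have hs2 : 0 < Real.sin ψ ^ 2 := by positivity
  have hc2 : 0 < Real.cos ψ ^ 2 := by positivity
  have hpyth : Real.sin ψ ^ 2 + Real.cos ψ ^ 2 = 1 := Real.sin_sq_add_cos_sq ψ
  have hA : Real.cos (ω - ω' + ξ) ≤ 1 := Real.cos_le_one _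
  have hB : Real.cos ((N - 1 : ℝ) * (ω - ω')) ≤ 1 := Real.cos_le_one _
  have hA1 : Real.cos (ω - ω' + ξ) = 1 := by nlinarith
  have hB1 : Real.cos ((N - 1 : ℝ) * (ω - ω')) = 1 := by nlinarith
  have hN1 : (0 : ℝ) < (N - 1 : ℝ) := by
    have : (2 : ℝ) ≤ N := by exact_mod_cast hN
    linarith
  obtain ⟨k, hk⟩ := (Real.cos_eq_one_iff _).mp hB1
  have hbound : |ω - ω'| < 2 * Real.pi / (N - 1 : ℝ) := by
    rw [abs_lt]
    constructor <;> [linarith [hω.1, hω'.2]; linarith [hω.2, hω'.1]]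
  have hπ := Real.pi_pos
  have habs : |(N - 1 : ℝ) * (ω - ω')| < 2 * Real.pi := by
    rw [abs_mul, abs_of_pos hN1]
    calc (N - 1 : ℝ) * |ω - ω'| < (N - 1 : ℝ) * (2 * Real.pi / (N - 1 : ℝ)) := by
          exact mul_lt_mul_of_pos_left hbound hN1
      _ = 2 * Real.pi := by field_simp
  have hk0 : k = 0 := by
    by_contra h
    have h1k : (1 : ℝ) ≤ |(k : ℝ)| := by
      exact_mod_cast Int.one_le_abs (by exact_mod_cast h)
    have : (2 : ℝ) * Real.pi ≤ |(k : ℝ) * (2 * Real.pi)| := by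
      rw [abs_mul, abs_of_pos (by linarith : (0:ℝ) < 2 * Real.pi)]
      nlinarith
    rw [hk] at this
    linarith [habs, this]
  have hωeq : ω = ω' := by
    rw [hk0] at hk
    push_cast at hk
    have : ω - ω' = 0 := by
      rcases mul_eq_zero.mp (by linarith : (N - 1 : ℝ) * (ω - ω') = 0) with h | h
      · linarith
      · exact h
    linarith
  refine ⟨hωeq, ?_⟩
  rw [hωeq] at hA1
  simpa using hA1
end

section
/- Let U ∈ SU(N) be a special unitary N×N matrix whose last column has all entries zero except possibly the (1,N) and (N,N) entries, i.e. U_{kN} = 0 for 2 ≤ k ≤ N−1. Then there exist ψ ∈ [0, π/2] and φ ∈ ℝ such that the matrix V := R(ψ, φ)·U, where R(ψ, φ) is the matrix acting as the 2×2 block ((cos ψ, −sin ψ e^{iφ}),(sin ψ e^{−iφ}, cos ψ)) on coordinates (1, N) and as the identity elsewhere, satisfies V_{1N} = 0. -/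
open Matrix Complex

/-- The rotation matrix `R(ψ, φ)` acting as the block
`((cos ψ, −sin ψ e^{iφ}),(sin ψ e^{−iφ}, cos ψ))` on coordinates `(1, N)`
and as the identity elsewhere (here `N = n + 2`). -/
noncomputable def eulerR (n : ℕ) (ψ φ : ℝ) : Matrix (Fin (n + 2)) (Fin (n + 2)) ℂ :=
  Matrix.of fun i j =>
    if i = 0 ∧ j = 0 then (Real.cos ψ : ℂ)
    else if i = 0 ∧ j = Fin.last (n + 1) then
      -(Real.sin ψ : ℂ) * Complex.exp (Complex.I * (φ : ℂ))
    else if i = Fin.last (n + 1) ∧ j = 0 then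
      (Real.sin ψ : ℂ) * Complex.exp (-Complex.I * (φ : ℂ))
    else if i = Fin.last (n + 1) ∧ j = Fin.last (n + 1) then (Real.cos ψ : ℂ)
    else if i = j then 1 else 0

/-- The `(1,N)` entry of `R(ψ,φ)·U` in terms of the `(1,N)` and `(N,N)` entries of `U`. -/
lemma eulerR_key (n : ℕ) (ψ φ : ℝ) (U : Matrix (Fin (n + 2)) (Fin (n + 2)) ℂ) :
    (eulerR n ψ φ * U) 0 (Fin.last (n + 1)) =
      (Real.cos ψ : ℂ) * U 0 (Fin.last (n + 1)) +
      (-(Real.sin ψ : ℂ) * Complex.exp (Complex.I * (φ : ℂ))) *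
        U (Fin.last (n + 1)) (Fin.last (n + 1)) := by
  have h01 : (0 : Fin (n+2)) ≠ Fin.last (n+1) := by
    simp [Fin.ext_iff]
  rw [Matrix.mul_apply]
  rw [← Finset.sum_subset (Finset.subset_univ {0, Fin.last (n+1)})]
  · rw [Finset.sum_pair h01]
    simp [eulerR, h01, h01.symm]
  · intro k _ hk
    simp only [Finset.mem_insert, Finset.mem_singleton, not_or] at hk
    have : eulerR n ψ φ 0 k = 0 := by
      simp [eulerR, hk.1, hk.2, Ne.symm hk.1, h01]
    rw [this, zero_mul]

/-- Annihilation of a 2-vector `(a, b)` with `a ≠ 0` by a rotation. -/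
lemma euler_annihilate (a b : ℂ) (hA : a ≠ 0) :
    ∃ ψ ∈ Set.Icc (0:ℝ) (Real.pi / 2), ∃ φ : ℝ,
      (Real.cos ψ : ℂ) * a + (-(Real.sin ψ : ℂ) * Complex.exp (Complex.I * (φ : ℂ))) * b = 0 := by
  set r := Real.sqrt (‖a‖ ^ 2 + ‖b‖ ^ 2) with hrdef
  have hra : ‖a‖ ≤ r := by
    rw [hrdef]
    calc ‖a‖ = Real.sqrt (‖a‖ ^ 2) := by
          rw [Real.sqrt_sq (norm_nonneg a)]
      _ ≤ _ := Real.sqrt_le_sqrt (le_add_of_nonneg_right (by positivity))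
  have hr : 0 < r := lt_of_lt_of_le (by simpa using hA) hra
  have hr2 : r ^ 2 = ‖a‖ ^ 2 + ‖b‖ ^ 2 := Real.sq_sqrt (by positivity)
  set ψ := Real.arcsin (‖a‖ / r) with hψdef
  have hx0 : 0 ≤ ‖a‖ / r := by positivity
  have hx1 : ‖a‖ / r ≤ 1 := (div_le_one hr).2 hra
  have hsin : Real.sin ψ = ‖a‖ / r := Real.sin_arcsin (by linarith) hx1
  have hcos : Real.cos ψ = ‖b‖ / r := by
    rw [hψdef, Real.cos_arcsin]
    rw [show 1 - (‖a‖ / r) ^ 2 = (‖b‖ / r) ^ 2 by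
      field_simp; linarith]
    exact Real.sqrt_sq (by positivity)
  refine ⟨ψ, ⟨Real.arcsin_nonneg.2 hx0, Real.arcsin_le_pi_div_two _⟩, ?_⟩
  by_cases hB : b = 0
  · exact ⟨0, by simp [hB, hcos, norm_zero]⟩
  · refine ⟨(a * (starRingEnd ℂ) b).arg, ?_⟩
    have haa : (‖a‖ : ℂ) ≠ 0 := by simpa using hA
    have hbb0 : (‖b‖ : ℂ) ≠ 0 := by simpa using hB
    have hrC : (r : ℂ) ≠ 0 := by exact_mod_cast hr.ne'
    have hexp : Complex.exp (Complex.I * ((a * (starRingEnd ℂ) b).arg : ℂ)) =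
        (a * (starRingEnd ℂ) b) / ((‖a‖ : ℂ) * (‖b‖ : ℂ)) := by
      have h := Complex.norm_mul_exp_arg_mul_I (a * (starRingEnd ℂ) b)
      rw [norm_mul, Complex.norm_conj] at h
      rw [mul_comm Complex.I]
      field_simp
      push_cast at h
      linear_combination h
    have hbb : (starRingEnd ℂ) b * b = (‖b‖ : ℂ) ^ 2 := by
      rw [mul_comm, Complex.mul_conj]
      norm_cast
      exact (Complex.sq_norm b).symm
    rw [hexp, hcos, hsin]
    push_cast
    field_simp
    linear_combination (-a) * hbb

/-- One annihilation step in the surjectivity proof of the Euler parametrization of `SU(N)`: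
if the last column of `U ∈ SU(N)` vanishes except possibly in entries `(1,N)` and `(N,N)`,
then some `R(ψ, φ)·U` has vanishing `(1,N)` entry. -/
theorem stmt_5 (n : ℕ) (U : Matrix (Fin (n + 2)) (Fin (n + 2)) ℂ)
    (hU : U ∈ Matrix.specialUnitaryGroup (Fin (n + 2)) ℂ)
    (hcol : ∀ k : Fin (n + 2), k ≠ 0 → k ≠ Fin.last (n + 1) → U k (Fin.last (n + 1)) = 0) :
    ∃ ψ ∈ Set.Icc (0:ℝ) (Real.pi / 2), ∃ φ : ℝ,
      (eulerR n ψ φ * U) 0 (Fin.last (n + 1)) = 0 := by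
  by_cases hA : U 0 (Fin.last (n + 1)) = 0
  · refine ⟨0, ⟨le_refl _, by positivity⟩, 0, ?_⟩
    rw [eulerR_key]
    simp [hA]
  · obtain ⟨ψ, hψ, φ, h⟩ :=
      euler_annihilate (U 0 (Fin.last (n + 1))) (U (Fin.last (n + 1)) (Fin.last (n + 1))) hA
    exact ⟨ψ, hψ, φ, by rw [eulerR_key]; exact h⟩
end

section
/- The Euler parametrization of SU(2), F₂(φ, ψ, ω) := diag(e^{iφ}, e^{−iφ}) · ((cos ψ, sin ψ),(−sin ψ, cos ψ)) · diag(e^{iω}, e^{−iω}), is injective on the open set (0, π) × (0, π/2) × (0, 2π). -/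
open Matrix Complex

/-- The Euler parametrization of `SU(2)`. -/
noncomputable def F₂ (φ ψ ω : ℝ) : Matrix (Fin 2) (Fin 2) ℂ :=
  !![Complex.exp (Complex.I * (φ : ℂ)), 0; 0, Complex.exp (-Complex.I * (φ : ℂ))]
    * !![(Real.cos ψ : ℂ), (Real.sin ψ : ℂ); -(Real.sin ψ : ℂ), (Real.cos ψ : ℂ)]
    * !![Complex.exp (Complex.I * (ω : ℂ)), 0; 0, Complex.exp (-Complex.I * (ω : ℂ))]

lemma e00 (φ ψ ω : ℝ) : (F₂ φ ψ ω) 0 0 = Complex.exp (Complex.I * (φ + ω)) * Real.cos ψ := by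
  simp [F₂, Matrix.mul_apply, Fin.sum_univ_two, mul_add, Complex.exp_add]
  ring

lemma e01 (φ ψ ω : ℝ) : (F₂ φ ψ ω) 0 1 = Complex.exp (Complex.I * (φ - ω)) * Real.sin ψ := by
  simp [F₂, Matrix.mul_apply, Fin.sum_univ_two, mul_sub, Complex.exp_sub, Complex.exp_neg]
  field_simp

lemma absIexp (z : ℂ) (hz : z.im = 0) : ‖Complex.exp (Complex.I * z)‖ = 1 := by
  rw [Complex.norm_exp]
  simp [Complex.mul_re, hz]

lemma expI_eq (a b : ℝ) (h : Complex.exp (Complex.I * a) = Complex.exp (Complex.I * b)) :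
    ∃ n : ℤ, a = b + n * (2 * Real.pi) := by
  rw [Complex.exp_eq_exp_iff_exists_int] at h
  obtain ⟨n, hn⟩ := h
  refine ⟨n, ?_⟩
  have := congrArg Complex.im hn
  simpa [mul_comm, Complex.ext_iff] using this

/-- The Euler parametrization of `SU(2)` is injective on `(0, π) × (0, π/2) × (0, 2π)`. -/
theorem stmt_8 (φ ψ ω φ' ψ' ω' : ℝ)
    (hφ : φ ∈ Set.Ioo 0 Real.pi) (hψ : ψ ∈ Set.Ioo 0 (Real.pi / 2))
    (hω : ω ∈ Set.Ioo 0 (2 * Real.pi))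
    (hφ' : φ' ∈ Set.Ioo 0 Real.pi) (hψ' : ψ' ∈ Set.Ioo 0 (Real.pi / 2))
    (hω' : ω' ∈ Set.Ioo 0 (2 * Real.pi))
    (h : F₂ φ ψ ω = F₂ φ' ψ' ω') :
    φ = φ' ∧ ψ = ψ' ∧ ω = ω' := by
  have pi_pos := Real.pi_pos
  have h00 : Complex.exp (Complex.I * (φ + ω)) * Real.cos ψ
      = Complex.exp (Complex.I * (φ' + ω')) * Real.cos ψ' := by
    rw [← e00, ← e00, h]
  have h01 : Complex.exp (Complex.I * (φ - ω)) * Real.sin ψ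
      = Complex.exp (Complex.I * (φ' - ω')) * Real.sin ψ' := by
    rw [← e01, ← e01, h]
  have hcos : 0 < Real.cos ψ := Real.cos_pos_of_mem_Ioo ⟨by linarith [hψ.1], hψ.2⟩
  have hcos' : 0 < Real.cos ψ' := Real.cos_pos_of_mem_Ioo ⟨by linarith [hψ'.1], hψ'.2⟩
  have hsin' : 0 < Real.sin ψ' := Real.sin_pos_of_pos_of_lt_pi hψ'.1 (by linarith [hψ'.2])
  have hcc : Real.cos ψ = Real.cos ψ' := by
    have := congrArg (‖·‖) h00
    rw [norm_mul, norm_mul, absIexp _ (by simp), absIexp _ (by simp),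
      one_mul, one_mul, Complex.norm_real, Complex.norm_real, Real.norm_eq_abs, Real.norm_eq_abs,
      abs_of_pos hcos, abs_of_pos hcos'] at this
    exact this
  have hψψ : ψ = ψ' :=
    Real.injOn_cos ⟨le_of_lt hψ.1, by linarith [hψ.2]⟩
      ⟨le_of_lt hψ'.1, by linarith [hψ'.2]⟩ hcc
  have hss : Real.sin ψ = Real.sin ψ' := by rw [hψψ]
  have hcosne : (Real.cos ψ' : ℂ) ≠ 0 := by exact_mod_cast hcos'.ne'
  have hsinne : (Real.sin ψ' : ℂ) ≠ 0 := by exact_mod_cast hsin'.ne'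
  rw [hcc] at h00
  rw [hss] at h01
  have hE1 : Complex.exp (Complex.I * ((φ : ℂ) + ω)) = Complex.exp (Complex.I * ((φ' : ℂ) + ω')) :=
    mul_right_cancel₀ hcosne h00
  have hE2 : Complex.exp (Complex.I * ((φ : ℂ) - ω)) = Complex.exp (Complex.I * ((φ' : ℂ) - ω')) :=
    mul_right_cancel₀ hsinne h01
  obtain ⟨n, hn⟩ := expI_eq (φ + ω) (φ' + ω') (by push_cast; exact_mod_cast hE1)
  obtain ⟨m, hm⟩ := expI_eq (φ - ω) (φ' - ω') (by push_cast; exact_mod_cast hE2)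
  have hsum : φ - φ' = ((n : ℝ) + m) * Real.pi := by linarith
  have hnm : n + m = 0 := by
    by_contra hc
    have h1 : (1 : ℝ) ≤ |((n : ℝ) + m)| := by
      have : (1 : ℤ) ≤ |n + m| := Int.one_le_abs hc
      calc (1:ℝ) ≤ |((n + m : ℤ) : ℝ)| := by exact_mod_cast this
        _ = |((n:ℝ) + m)| := by push_cast; ring_nf
    have hge : Real.pi ≤ |φ - φ'| := by
      rw [hsum, abs_mul, abs_of_pos pi_pos]
      nlinarith
    have hlt : |φ - φ'| < Real.pi :=
      abs_lt.mpr ⟨by linarith [hφ.1, hφ'.2], by linarith [hφ.2, hφ'.1]⟩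
    linarith
  have hφφ : φ = φ' := by
    have : (n : ℝ) + m = 0 := by exact_mod_cast congrArg (Int.cast : ℤ → ℝ) hnm
    rw [this] at hsum; linarith
  have hn0 : n = 0 := by
    by_contra hc
    have h1 : (1 : ℝ) ≤ |(n : ℝ)| := by exact_mod_cast Int.one_le_abs hc
    have hωeq : ω - ω' = (n : ℝ) * (2 * Real.pi) := by
      rw [hφφ] at hn; linarith
    have hge : 2 * Real.pi ≤ |ω - ω'| := by
      rw [hωeq, abs_mul, abs_of_pos (by linarith : (0:ℝ) < 2 * Real.pi)]
      nlinarith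
    have hlt : |ω - ω'| < 2 * Real.pi :=
      abs_lt.mpr ⟨by linarith [hω.1, hω'.2], by linarith [hω.2, hω'.1]⟩
    linarith
  refine ⟨hφφ, hψψ, ?_⟩
  have : ω - ω' = (n : ℝ) * (2 * Real.pi) := by rw [hφφ] at hn; linarith
  rw [hn0] at this
  push_cast at this
  linarith
end
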